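/- Let l ≥ 1, N = 2l+1, and let S = ℤ/Nℤ with the character χ([m]) = e^{2πim/N}. Then the trigonometric Lie algebra Â_S is isomorphic as a complex Lie algebra to the affine Lie algebra ĝl_N = (M_N(ℂ) ⊗ ℂ[t,t⁻¹]) ⊕ ℂ·k, where k is central and [X⊗t^m, Y⊗t^n] = (XY − YX)⊗t^{m+n} + m·tr(XY)·δ_{m+n,0}·k for X, Y ∈ M_N(ℂ) and m, n ∈ ℤ. -/
import Mathlib


open scoped Classical

/-! The trigonometric Lie algebra `Â_S`. -/

/-- The underlying vector space `ℂ ⊕ ((S × ℤ) →₀ ℂ)` of `Â_S`. -/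
abbrev TrigA (S : Type*) := ℂ × ((S × ℤ) →₀ ℂ)

/-- The central basis element `c`. -/
noncomputable def Acen (S : Type*) : TrigA S := (1, 0)

/-- The basis element `A_{α,m}`. -/
noncomputable def Agen {S : Type*} (α : S) (m : ℤ) : TrigA S := (0, Finsupp.single (α, m) 1)

/-- The value of the bracket of `Â_S` on basis elements. -/
noncomputable def AbrkBasis {S : Type*} [AddCommGroup S] (χ : S → ℂˣ) (p q : S × ℤ) :
    TrigA S :=
  ((if p.1 + q.1 = 0 ∧ p.2 + q.2 = 0 then (p.2 : ℂ) else 0),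
    Finsupp.single (p.1 + q.1, p.2 + q.2)
      (((χ (p.2 • q.1 - q.2 • p.1) : ℂˣ) : ℂ) - ((χ (q.2 • p.1 - p.2 • q.1) : ℂˣ) : ℂ)))

/-- The Lie bracket of `Â_S`. -/
noncomputable def Abrk {S : Type*} [AddCommGroup S] (χ : S → ℂˣ) (x y : TrigA S) : TrigA S :=
  x.2.sum fun p a => y.2.sum fun q b => (a * b) • AbrkBasis χ p q

/-- The character `χ : ℤ/Nℤ → ℂˣ`, `χ([m]) = e^{2πim/N}`. -/
noncomputable def chiN (N : ℕ) : ZMod N → ℂˣ := fun x =>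
  Units.mk0 (Complex.exp (2 * Real.pi * Complex.I * x.val / N)) (Complex.exp_ne_zero _)

/-! The affine Lie algebra `ĝl_N = (M_N(ℂ) ⊗ ℂ[t,t⁻¹]) ⊕ ℂ·k`, realized on the basis
`{E_{ij} ⊗ t^m} ∪ {k}`. -/

/-- The underlying vector space of `ĝl_N`. -/
abbrev GlHat (N : ℕ) := ℂ × (((Fin N × Fin N) × ℤ) →₀ ℂ)

/-- The central element `k` of `ĝl_N`. -/
noncomputable def glHatk (N : ℕ) : GlHat N := (1, 0)

/-- The basis element `E_{ij} ⊗ t^m` of `ĝl_N`. -/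
noncomputable def glHatGen {N : ℕ} (i j : Fin N) (m : ℤ) : GlHat N :=
  (0, Finsupp.single ((i, j), m) 1)

/-- The affine bracket on basis elements: for `X ⊗ t^m, Y ⊗ t^n` one has
`[X⊗t^m, Y⊗t^n] = (XY − YX) ⊗ t^{m+n} + m·tr(XY)·δ_{m+n,0}·k`;
on `X = E_{ij}`, `Y = E_{kl}` this reads
`δ_{jk} E_{il}⊗t^{m+n} − δ_{li} E_{kj}⊗t^{m+n} + m δ_{jk} δ_{il} δ_{m+n,0} k`. -/
noncomputable def glHatBrkBasis {N : ℕ} (P Q : (Fin N × Fin N) × ℤ) : GlHat N :=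
  ((if P.1.2 = Q.1.1 ∧ P.1.1 = Q.1.2 ∧ P.2 + Q.2 = 0 then (P.2 : ℂ) else 0),
    (if P.1.2 = Q.1.1 then Finsupp.single ((P.1.1, Q.1.2), P.2 + Q.2) (1 : ℂ) else 0)
      - (if Q.1.2 = P.1.1 then Finsupp.single ((Q.1.1, P.1.2), P.2 + Q.2) (1 : ℂ) else 0))

/-- The Lie bracket of `ĝl_N` (with `k` central). -/
noncomputable def glHatBrk {N : ℕ} (x y : GlHat N) : GlHat N :=
  x.2.sum fun P a => y.2.sum fun Q b => (a * b) • glHatBrkBasis P Q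

open Finset

noncomputable def ee (N : ℕ) (k : ℤ) : ℂ := Complex.exp (2 * Real.pi * Complex.I * k / N)

variable {N : ℕ}

lemma ee_add (j k : ℤ) : ee N (j + k) = ee N j * ee N k := by
  rw [ee, ee, ee, ← Complex.exp_add]
  congr 1
  push_cast
  ring

lemma ee_zero : ee N 0 = 1 := by simp [ee]

lemma ee_dvd_one [NeZero N] {k : ℤ} (h : (N : ℤ) ∣ k) : ee N k = 1 := by
  obtain ⟨t, rfl⟩ := h
  rw [ee]
  have hN : (N : ℂ) ≠ 0 := by exact_mod_cast (NeZero.ne N)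
  have h2 : 2 * (Real.pi:ℂ) * Complex.I * (((N:ℤ) * t : ℤ) : ℂ) / N
      = (t:ℂ) * (2 * Real.pi * Complex.I) := by
    push_cast
    field_simp
  rw [h2, Complex.exp_int_mul_two_pi_mul_I]

lemma ee_eq_of_dvd_sub [NeZero N] {x y : ℤ} (h : (N : ℤ) ∣ x - y) : ee N x = ee N y := by
  have h1 : ee N x = ee N (y + (x - y)) := by ring_nf
  rw [h1, ee_add, ee_dvd_one h, mul_one]

lemma ee_eq_of_modEq [NeZero N] {x y : ℤ} (h : x ≡ y [ZMOD (N:ℤ)]) : ee N x = ee N y :=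
  ee_eq_of_dvd_sub (Int.ModEq.dvd h.symm)

lemma ee_eq_one_iff [NeZero N] {k : ℤ} : ee N k = 1 ↔ (N : ℤ) ∣ k := by
  constructor
  · intro h
    rw [ee, Complex.exp_eq_one_iff] at h
    obtain ⟨n, hn⟩ := h
    have hN : (N : ℂ) ≠ 0 := by exact_mod_cast (NeZero.ne N)
    have hpi : (2 : ℂ) * Real.pi * Complex.I ≠ 0 := by
      simp [Real.pi_ne_zero, Complex.I_ne_zero]
    refine ⟨n, ?_⟩
    have h3 : (k : ℂ) = (N : ℂ) * n := by
      field_simp at hn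
      have hn2 : (k:ℂ) * (2 * Real.pi * Complex.I) = ((N:ℂ) * n) * (2 * Real.pi * Complex.I) := by
        rw [show (k:ℂ) * (2 * Real.pi * Complex.I) = 2 * Real.pi * Complex.I * k by ring, hn]; ring
      have := mul_right_cancel₀ hpi hn2
      rw [this]
    exact_mod_cast h3
  · exact ee_dvd_one

lemma ee_pow (k : ℤ) (n : ℕ) : ee N k ^ n = ee N (k * n) := by
  induction n with
  | zero => simp [ee_zero]
  | succ n ih =>
      rw [pow_succ, ih, ← ee_add]
      congr 1
      push_cast
      ring

section Row
variable [NeZero N]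

lemma Npos : 0 < (N:ℤ) := by exact_mod_cast Nat.pos_of_ne_zero (NeZero.ne N)

def rowF (N : ℕ) [NeZero N] (j : Fin N) (m : ℤ) : Fin N :=
  ⟨(((j : ℤ) + m) % N).toNat, by
    have h1 : 0 ≤ ((j : ℤ) + m) % N := Int.emod_nonneg _ (by exact_mod_cast NeZero.ne N)
    have h2 : ((j : ℤ) + m) % N < N := Int.emod_lt_of_pos _ Npos
    omega⟩

def wrapF (j : Fin N) (m : ℤ) : ℤ := ((j : ℤ) + m) / N

lemma rowF_coe (j : Fin N) (m : ℤ) : ((rowF N j m : Fin N) : ℤ) = ((j : ℤ) + m) % N := by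
  have h1 : 0 ≤ ((j : ℤ) + m) % N := Int.emod_nonneg _ (by exact_mod_cast NeZero.ne N)
  simp only [rowF]
  exact Int.toNat_of_nonneg h1

lemma rowF_wrapF (j : Fin N) (m : ℤ) :
    (N : ℤ) * wrapF j m + (rowF N j m : ℤ) = (j : ℤ) + m := by
  rw [rowF_coe, wrapF]; exact Int.mul_ediv_add_emod _ _

lemma rowF_modEq (j : Fin N) (m : ℤ) : ((rowF N j m : Fin N) : ℤ) ≡ (j:ℤ) + m [ZMOD (N:ℤ)] := by
  rw [rowF_coe]
  exact Int.emod_emod_of_dvd _ dvd_rfl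

lemma rowF_eq_iff {j i : Fin N} {m : ℤ} :
    rowF N j m = i ↔ ((j:ℤ) + m) % N = (i : ℤ) := by
  constructor
  · intro h; rw [← h, rowF_coe]
  · intro h
    have := rowF_coe j m
    apply Fin.ext
    omega

lemma rowF_rowF (j : Fin N) (m n : ℤ) : rowF N (rowF N j m) n = rowF N j (m + n) := by
  rw [rowF_eq_iff, rowF_coe, rowF_coe]
  conv_lhs => rw [show ((j:ℤ) + m) % N + n = ((j:ℤ) + (m+n)) + N * (-(((j:ℤ)+m)/N)) by
    rw [Int.emod_def]; ring]
  rw [Int.add_mul_emod_self_left]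

lemma wrapF_add (j : Fin N) (m n : ℤ) :
    wrapF j m + wrapF (rowF N j m) n = wrapF j (m + n) := by
  have h1 := rowF_wrapF j m
  have h2 := rowF_wrapF (rowF N j m) n
  have h3 := rowF_wrapF j (m + n)
  have h4 : rowF N (rowF N j m) n = rowF N j (m+n) := rowF_rowF j m n
  rw [h4] at h2
  have hN := Npos (N := N)
  nlinarith [h1, h2, h3]

lemma rowF_zero (j : Fin N) : rowF N j 0 = j := by
  rw [rowF_eq_iff, add_zero]
  exact Int.emod_eq_of_lt (by positivity) (by exact_mod_cast j.isLt)

lemma wrapF_zero (j : Fin N) : wrapF j 0 = 0 := by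
  rw [wrapF, add_zero]
  exact Int.ediv_eq_zero_of_lt (by positivity) (by exact_mod_cast j.isLt)

/-- sum of a nontrivial character over `Fin N` vanishes -/
lemma sum_ee (d : ℤ) (hd : ¬ (N:ℤ) ∣ d) : ∑ j : Fin N, ee N (d * j) = 0 := by
  have h1 : ∀ j : Fin N, ee N (d * j) = ee N d ^ (j : ℕ) := by
    intro j; rw [ee_pow]
  simp only [h1]
  rw [Fin.sum_univ_eq_sum_range (fun i => ee N d ^ i), geom_sum_eq, ee_pow]
  · rw [ee_dvd_one ⟨d, by ring⟩]
    simp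
  · rw [Ne, ee_eq_one_iff]; exact hd

lemma sum_ee_ite (d : ℤ) : ∑ j : Fin N, ee N (d * j) = if (N:ℤ) ∣ d then (N:ℂ) else 0 := by
  split_ifs with h
  · have : ∀ j : Fin N, ee N (d * j) = 1 := fun j => ee_dvd_one (Dvd.dvd.mul_right h _)
    simp [this]
  · exact sum_ee d h

lemma sum_wrapF (m : ℤ) : ∑ j : Fin N, wrapF j m = m := by
  have key : ∑ j : Fin N, ((rowF N j m : Fin N) : ℤ) = ∑ j : Fin N, ((j : Fin N) : ℤ) := by
    apply Function.Bijective.sum_comp (e := fun j => rowF N j m) ?_ (fun j => ((j : Fin N) : ℤ))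
    rw [Fintype.bijective_iff_injective_and_card]
    refine ⟨?_, rfl⟩
    intro j j' h
    simp only at h
    have h1 := rowF_wrapF j m
    have h2 := rowF_wrapF j' m
    rw [h] at h1
    have hj : (j:ℤ) - j' = (N:ℤ) * (wrapF j m - wrapF j' m) := by rw [mul_sub]; linarith
    have hN := Npos (N := N)
    have hjl : (j:ℤ) < N := by exact_mod_cast j.isLt
    have hjl' : (j':ℤ) < N := by exact_mod_cast j'.isLt
    have hj0 : (0:ℤ) ≤ j := Int.ofNat_nonneg _
    have hj0' : (0:ℤ) ≤ j' := Int.ofNat_nonneg _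
    have hdvd : (N:ℤ) ∣ (j:ℤ) - j' := ⟨_, hj⟩
    have habs : |(j:ℤ) - j'| < N := abs_lt.2 ⟨by linarith, by linarith⟩
    have : (j : ℤ) - j' = 0 := Int.eq_zero_of_abs_lt_dvd hdvd habs
    exact Fin.ext (by omega)
  have h5 : ∀ j : Fin N, (N:ℤ) * wrapF j m = (j:ℤ) + m - (rowF N j m : ℤ) := by
    intro j; have := rowF_wrapF j m; linarith
  have h6 : (N:ℤ) * ∑ j : Fin N, wrapF j m = (N:ℤ) * m := by
    rw [Finset.mul_sum]
    simp only [h5]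
    rw [Finset.sum_sub_distrib, Finset.sum_add_distrib, key]
    simp [Finset.card_univ]
  exact mul_left_cancel₀ (by exact_mod_cast NeZero.ne N) h6

end Row

section Central
variable [NeZero N]

lemma wrapF_split (j : Fin N) (m : ℤ) :
    wrapF j m = m / N + (if (N:ℤ) ≤ (j:ℤ) + m % N then 1 else 0) := by
  have hN : (N:ℤ) ≠ 0 := by exact_mod_cast NeZero.ne N
  have hNp := Npos (N := N)
  have hj0 : (0:ℤ) ≤ (j:ℤ) := Int.ofNat_nonneg _
  have hjl : (j:ℤ) < N := by exact_mod_cast j.isLt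
  have hr0 : 0 ≤ m % N := Int.emod_nonneg _ hN
  have hrl : m % N < N := Int.emod_lt_of_pos _ hNp
  have hm : m = (N:ℤ) * (m / N) + m % N := (Int.mul_ediv_add_emod _ _).symm
  rw [wrapF]
  conv_lhs => rw [show (j:ℤ) + m = ((j:ℤ) + m % N) + (m / N) * N by rw [Int.emod_def]; ring]
  rw [Int.add_mul_ediv_right _ _ hN]
  split_ifs with h
  · have h1 : ((j:ℤ) + m % N) = ((j:ℤ) + m % N - N) + 1 * N := by ring
    rw [h1, Int.add_mul_ediv_right _ _ hN,
      Int.ediv_eq_zero_of_lt (by linarith) (by linarith)]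
    ring
  · rw [Int.ediv_eq_zero_of_lt (by linarith) (by linarith)]
    ring

lemma central_sum (t m : ℤ) (ht : ¬ (N:ℤ) ∣ 2*t) :
    ∑ j : Fin N, ee N (-(2*t) * j) * ((wrapF j m : ℤ) : ℂ)
      = (1 - ee N (2*t*m)) / (ee N (-(2*t)) - 1) := by
  have hN : (N:ℤ) ≠ 0 := by exact_mod_cast NeZero.ne N
  have hNp := Npos (N := N)
  set x : ℂ := ee N (-(2*t)) with hx
  have hx1 : x ≠ 1 := by
    rw [hx, Ne, ee_eq_one_iff]
    intro h
    exact ht ((dvd_neg).1 h)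
  have hxN : x ^ N = 1 := by
    rw [hx, ee_pow]
    exact ee_dvd_one ⟨-(2*t), by ring⟩
  set r : ℤ := m % N with hrdef
  have hr0 : 0 ≤ r := Int.emod_nonneg _ hN
  have hrl : r < N := Int.emod_lt_of_pos _ hNp
  set rt : ℕ := r.toNat with hrt
  have hrtc : (rt : ℤ) = r := Int.toNat_of_nonneg hr0
  have hrtN : rt ≤ N := by omega
  -- rewrite each term
  have hterm : ∀ j : Fin N, ee N (-(2*t) * j) * ((wrapF j m : ℤ) : ℂ)
      = (m / N : ℤ) * ee N (-(2*t) * j)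
        + (if (N:ℤ) ≤ (j:ℤ) + r then x ^ (j:ℕ) else 0) := by
    intro j
    rw [wrapF_split, hx, ee_pow]
    push_cast
    split_ifs with h
    · push_cast
      ring_nf
    · push_cast
      ring
  rw [Finset.sum_congr rfl (fun j _ => hterm j)]
  rw [Finset.sum_add_distrib, ← Finset.mul_sum, sum_ee _ (by
    intro h; exact ht ((dvd_neg).1 h)), mul_zero, zero_add]
  -- second sum
  have h2 : ∑ j : Fin N, (if (N:ℤ) ≤ (j:ℤ) + r then x ^ (j:ℕ) else 0)
      = ∑ j ∈ Finset.range N, (if (N:ℤ) ≤ (j:ℤ) + r then x ^ j else 0) := by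
    rw [← Fin.sum_univ_eq_sum_range (fun j => if (N:ℤ) ≤ (j:ℤ) + r then x ^ j else 0) N]
  rw [h2]
  have hsplit : Finset.range N = Finset.Ico 0 N := by
    rw [Finset.range_eq_Ico]
  rw [hsplit, ← Finset.sum_Ico_consecutive _ (Nat.zero_le (N - rt)) (Nat.sub_le N rt)]
  have hz : ∑ j ∈ Finset.Ico 0 (N - rt), (if (N:ℤ) ≤ (j:ℤ) + r then x ^ j else 0) = 0 := by
    apply Finset.sum_eq_zero
    intro j hj
    rw [Finset.mem_Ico] at hj
    rw [if_neg]
    omega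
  have ho : ∑ j ∈ Finset.Ico (N - rt) N, (if (N:ℤ) ≤ (j:ℤ) + r then x ^ j else 0)
      = ∑ j ∈ Finset.Ico (N - rt) N, x ^ j := by
    apply Finset.sum_congr rfl
    intro j hj
    rw [Finset.mem_Ico] at hj
    rw [if_pos]
    omega
  rw [hz, ho, zero_add, geom_sum_Ico hx1 (Nat.sub_le N rt), hxN]
  congr 2
  rw [hx, ee_pow]
  apply ee_eq_of_dvd_sub
  have hdm : (N:ℤ) ∣ r - m := ⟨-(m / N), by rw [hrdef, Int.emod_def]; ring⟩
  have hc : ((N - rt : ℕ) : ℤ) = (N:ℤ) - r := by omega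
  rw [hc]
  obtain ⟨c, hcc⟩ := hdm
  exact ⟨-(2*t) + 2*t*c, by rw [show (2:ℤ)*t*m = 2*t*(r - N*c) by rw [← hcc]; ring]; ring⟩

end Central

section Maps
variable [NeZero N]

/-- orthogonality helper -/
lemma sum_ee_delta (hodd : Odd N) (c d : ℤ) (hd1 : -(N:ℤ) < d) (hd2 : d < N) :
    ∑ j : Fin N, ee N ((c + 2*(j:ℤ)) * d) = if d = 0 then (N:ℂ) else 0 := by
  have h1 : ∀ j : Fin N, ee N ((c + 2*(j:ℤ)) * d) = ee N (c*d) * ee N ((2*d) * j) := by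
    intro j
    rw [← ee_add]
    congr 1
    ring
  rw [Finset.sum_congr rfl (fun j _ => h1 j), ← Finset.mul_sum, sum_ee_ite]
  have hcop : IsCoprime ((N:ℤ)) 2 := by
    rw [Int.isCoprime_iff_gcd_eq_one]
    have h2 : Nat.Coprime N 2 := Nat.Coprime.symm (Nat.coprime_two_left.mpr hodd)
    simpa [Int.gcd] using h2
  have hiff : ((N:ℤ) ∣ 2*d) ↔ d = 0 := by
    constructor
    · intro h
      have hdd : (N:ℤ) ∣ d := hcop.dvd_of_dvd_mul_left h
      rcases hdd with ⟨e, he⟩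
      have hNp := Npos (N := N)
      rcases lt_trichotomy e 0 with he1 | he1 | he1
      · nlinarith
      · simp [he, he1]
      · nlinarith
    · rintro rfl; simp
  split_ifs with h h' h'
  · rw [h', mul_zero, ee_zero, one_mul]
  · exact absurd (hiff.1 h) h'
  · exact absurd (hiff.2 h') h
  · rw [mul_zero]

noncomputable def cf (α : ZMod N) (m : ℤ) (j : Fin N) : ℂ :=
  ee N (-((m + 2*(j:ℤ)) * (α.val : ℤ)))

def Kp (p : ZMod N × ℤ) (j : Fin N) : (Fin N × Fin N) × ℤ :=
  ((rowF N j p.2, j), wrapF j p.2)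

noncomputable def Tf (p : ZMod N × ℤ) : ((Fin N × Fin N) × ℤ) →₀ ℂ :=
  ∑ j : Fin N, Finsupp.single (Kp p j) (cf p.1 p.2 j)

noncomputable def Ff : ((ZMod N × ℤ) →₀ ℂ) →ₗ[ℂ] (((Fin N × Fin N) × ℤ) →₀ ℂ) :=
  Finsupp.lsum ℂ fun p => LinearMap.toSpanSingleton ℂ _ (Tf p)

/-- the integer degree attached to a `ĝl_N`-index. -/
def mOf (P : (Fin N × Fin N) × ℤ) : ℤ := P.2 * N + (P.1.1 : ℤ) - (P.1.2 : ℤ)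

noncomputable def Sf (P : (Fin N × Fin N) × ℤ) : (ZMod N × ℤ) →₀ ℂ :=
  (N:ℂ)⁻¹ • ∑ a : Fin N, Finsupp.single (((a : ℕ) : ZMod N), mOf P)
    (ee N ((mOf P + 2*((P.1.2 : ℕ) : ℤ)) * ((a : ℕ) : ℤ)))

noncomputable def Gf : (((Fin N × Fin N) × ℤ) →₀ ℂ) →ₗ[ℂ] ((ZMod N × ℤ) →₀ ℂ) :=
  Finsupp.lsum ℂ fun P => LinearMap.toSpanSingleton ℂ _ (Sf P)

lemma Ff_single (p : ZMod N × ℤ) (c : ℂ) : Ff (Finsupp.single p c) = c • Tf p := by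
  simp [Ff]

lemma Gf_single (P : (Fin N × Fin N) × ℤ) (c : ℂ) : Gf (Finsupp.single P c) = c • Sf P := by
  simp [Gf]

lemma mOf_Kp (p : ZMod N × ℤ) (j : Fin N) : mOf (Kp p j) = p.2 := by
  have := rowF_wrapF j p.2
  simp only [mOf, Kp]
  linarith

lemma val_lt' (α : ZMod N) : ((α.val : ℤ)) < N := by
  exact_mod_cast ZMod.val_lt α

lemma GF_single (hodd : Odd N) (p : ZMod N × ℤ) : Gf (Ff (Finsupp.single p (1:ℂ))) = Finsupp.single p 1 := by
  obtain ⟨α, m⟩ := p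
  rw [Ff_single, one_smul, Tf, map_sum]
  have h1 : ∀ j : Fin N, Gf (Finsupp.single (Kp (α, m) j) (cf α m j))
      = (N:ℂ)⁻¹ • ∑ a : Fin N, Finsupp.single (((a : ℕ) : ZMod N), m)
          (cf α m j * ee N ((m + 2*(j:ℤ)) * ((a:ℕ) : ℤ))) := by
    intro j
    rw [Gf_single, Sf, mOf_Kp]
    rw [smul_comm, Finset.smul_sum]
    congr 1
    apply Finset.sum_congr rfl
    intro a _
    rw [Finsupp.smul_single, smul_eq_mul]
    simp [Kp]
  rw [Finset.sum_congr rfl (fun j _ => h1 j), ← Finset.smul_sum, Finset.sum_comm]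
  have h2 : ∀ a : Fin N, ∑ j : Fin N, Finsupp.single (((a:ℕ) : ZMod N), m)
      (cf α m j * ee N ((m + 2*(j:ℤ)) * ((a:ℕ):ℤ)))
      = Finsupp.single (((a:ℕ) : ZMod N), m)
        (∑ j : Fin N, cf α m j * ee N ((m + 2*(j:ℤ)) * ((a:ℕ):ℤ))) := by
    intro a
    exact (map_sum (Finsupp.singleAddHom (((a:ℕ) : ZMod N), m)) _ _).symm
  rw [Finset.sum_congr rfl (fun a _ => h2 a)]
  have h3 : ∀ a : Fin N, (∑ j : Fin N, cf α m j * ee N ((m + 2*(j:ℤ)) * ((a:ℕ):ℤ)))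
      = if ((a:ℕ):ℤ) - (α.val:ℤ) = 0 then (N:ℂ) else 0 := by
    intro a
    have h4 : ∀ j : Fin N, cf α m j * ee N ((m + 2*(j:ℤ)) * ((a:ℕ):ℤ))
        = ee N ((m + 2*(j:ℤ)) * (((a:ℕ):ℤ) - (α.val:ℤ))) := by
      intro j
      rw [cf, ← ee_add]
      congr 1
      ring
    rw [Finset.sum_congr rfl (fun j _ => h4 j)]
    refine sum_ee_delta hodd m _ ?_ ?_
    · have h6 := val_lt' α
      have h7 : (0:ℤ) ≤ ((a:ℕ):ℤ) := by positivity
      omega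
    · have h6 : ((a:ℕ):ℤ) < N := by exact_mod_cast a.isLt
      have h7 : (0:ℤ) ≤ (α.val:ℤ) := by positivity
      omega
  rw [Finset.sum_congr rfl (fun a _ => by rw [h3 a])]
  have a0lt : α.val < N := ZMod.val_lt α
  have h5 : ∑ a : Fin N, Finsupp.single (((a:ℕ) : ZMod N), m)
      (if ((a:ℕ):ℤ) - (α.val:ℤ) = 0 then (N:ℂ) else 0)
      = Finsupp.single ((((⟨α.val, a0lt⟩ : Fin N):ℕ) : ZMod N), m) (N:ℂ) := by
    rw [Finset.sum_eq_single (⟨α.val, a0lt⟩ : Fin N)]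
    · rw [if_pos]
      simp
    · intro b _ hb
      rw [if_neg, Finsupp.single_zero]
      intro hc
      apply hb
      apply Fin.ext
      simp only [Fin.val_mk]
      omega
    · intro h; exact absurd (Finset.mem_univ _) h
  rw [h5]
  rw [Finsupp.smul_single, smul_eq_mul, inv_mul_cancel₀ (by exact_mod_cast NeZero.ne N)]
  congr 2
  simp only
  rw [ZMod.natCast_val, ZMod.cast_id]

end Maps

section Maps2
variable [NeZero N]

lemma Kp_mOf (x : ZMod N) (P : (Fin N × Fin N) × ℤ) : Kp (x, mOf P) P.1.2 = P := by
  have hNp := Npos (N := N)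
  have h1 : ((P.1.2:ℤ)) + mOf P = (P.1.1:ℤ) + P.2 * N := by rw [mOf]; ring
  have hi0 : (0:ℤ) ≤ (P.1.1:ℤ) := Int.ofNat_nonneg _
  have hil : ((P.1.1:ℤ)) < N := by exact_mod_cast P.1.1.isLt
  have hrow : rowF N P.1.2 (mOf P) = P.1.1 := by
    rw [rowF_eq_iff, h1, Int.add_mul_emod_self_right]
    exact Int.emod_eq_of_lt hi0 hil
  have hwrap : wrapF P.1.2 (mOf P) = P.2 := by
    rw [wrapF, h1, Int.add_mul_ediv_right _ _ (by exact_mod_cast NeZero.ne N),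
      Int.ediv_eq_zero_of_lt hi0 hil]
    ring
  show ((rowF N P.1.2 (mOf P), P.1.2), wrapF P.1.2 (mOf P)) = P
  rw [hrow, hwrap]

lemma FG_single (hodd : Odd N) (P : (Fin N × Fin N) × ℤ) :
    Ff (Gf (Finsupp.single P (1:ℂ))) = Finsupp.single P 1 := by
  rw [Gf_single, one_smul, Sf, map_smul, map_sum]
  have h1 : ∀ a : Fin N, Ff (Finsupp.single (((a:ℕ) : ZMod N), mOf P)
        (ee N ((mOf P + 2*((P.1.2:ℕ):ℤ)) * ((a:ℕ):ℤ))))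
      = ∑ j : Fin N, Finsupp.single (Kp (((a:ℕ) : ZMod N), mOf P) j)
          (ee N ((mOf P + 2*((P.1.2:ℕ):ℤ)) * ((a:ℕ):ℤ)) * cf ((a:ℕ) : ZMod N) (mOf P) j) := by
    intro a
    rw [Ff_single, Tf, Finset.smul_sum]
    apply Finset.sum_congr rfl
    intro j _
    rw [Finsupp.smul_single, smul_eq_mul]
  rw [Finset.sum_congr rfl (fun a _ => h1 a), Finset.sum_comm]
  have hKp : ∀ (a : Fin N) (j : Fin N), Kp (((a:ℕ) : ZMod N), mOf P) j = Kp (0, mOf P) j := by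
    intro a j; rfl
  have h2 : ∀ j : Fin N, ∑ a : Fin N, Finsupp.single (Kp (((a:ℕ) : ZMod N), mOf P) j)
        (ee N ((mOf P + 2*((P.1.2:ℕ):ℤ)) * ((a:ℕ):ℤ)) * cf ((a:ℕ) : ZMod N) (mOf P) j)
      = Finsupp.single (Kp (0, mOf P) j)
        (if ((P.1.2:ℕ):ℤ) - ((j:ℕ):ℤ) = 0 then (N:ℂ) else 0) := by
    intro j
    rw [Finset.sum_congr rfl (fun a _ => by rw [hKp a j])]
    have h4 : (∑ a : Fin N, Finsupp.single (Kp (0, mOf P) j)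
        (ee N ((mOf P + 2*((P.1.2:ℕ):ℤ)) * ((a:ℕ):ℤ)) * cf ((a:ℕ) : ZMod N) (mOf P) j))
        = Finsupp.single (Kp (0, mOf P) j) (∑ a : Fin N,
          ee N ((mOf P + 2*((P.1.2:ℕ):ℤ)) * ((a:ℕ):ℤ)) * cf ((a:ℕ) : ZMod N) (mOf P) j) :=
      (map_sum (Finsupp.singleAddHom (Kp (0, mOf P) j)) _ _).symm
    rw [h4]
    congr 1
    have h3 : ∀ a : Fin N, ee N ((mOf P + 2*((P.1.2:ℕ):ℤ)) * ((a:ℕ):ℤ))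
        * cf ((a:ℕ) : ZMod N) (mOf P) j
        = ee N ((0 + 2*((a:ℕ):ℤ)) * (((P.1.2:ℕ):ℤ) - ((j:ℕ):ℤ))) := by
      intro a
      rw [cf, ← ee_add]
      have hval : ((((a:ℕ) : ZMod N)).val : ℤ) = ((a:ℕ):ℤ) := by
        rw [ZMod.val_natCast_of_lt a.isLt]
      rw [hval]
      congr 1
      ring
    rw [Finset.sum_congr rfl (fun a _ => h3 a)]
    refine sum_ee_delta hodd 0 _ ?_ ?_
    · have h6 : ((j:ℕ):ℤ) < N := by exact_mod_cast j.isLt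
      have h7 : (0:ℤ) ≤ ((P.1.2:ℕ):ℤ) := by positivity
      omega
    · have h6 : ((P.1.2:ℕ):ℤ) < N := by exact_mod_cast P.1.2.isLt
      have h7 : (0:ℤ) ≤ ((j:ℕ):ℤ) := by positivity
      omega
  rw [Finset.sum_congr rfl (fun j _ => h2 j)]
  rw [Finset.sum_eq_single P.1.2]
  · rw [if_pos (by ring), Kp_mOf, Finsupp.smul_single, smul_eq_mul,
      inv_mul_cancel₀ (by exact_mod_cast NeZero.ne N)]
  · intro b _ hb
    rw [if_neg, Finsupp.single_zero]
    intro hc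
    exact hb (Fin.ext (by omega))
  · intro h; exact absurd (Finset.mem_univ _) h

lemma GF_id (hodd : Odd N) :
    (Gf (N:=N)).comp Ff = LinearMap.id := by
  apply Finsupp.lhom_ext
  intro p b
  have h1 : Finsupp.single p b = b • Finsupp.single p (1:ℂ) := by
    rw [Finsupp.smul_single, smul_eq_mul, mul_one]
  rw [LinearMap.comp_apply, h1, map_smul, map_smul, GF_single hodd]
  simp

lemma FG_id (hodd : Odd N) :
    (Ff (N:=N)).comp Gf = LinearMap.id := by
  apply Finsupp.lhom_ext
  intro P b
  have h1 : Finsupp.single P b = b • Finsupp.single P (1:ℂ) := by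
    rw [Finsupp.smul_single, smul_eq_mul, mul_one]
  rw [LinearMap.comp_apply, h1, map_smul, map_smul, FG_single hodd]
  simp

end Maps2
section Equiv
variable [NeZero N]

lemma chi_coe (x : ZMod N) : ((chiN N x : ℂˣ) : ℂ) = ee N (x.val : ℤ) := by
  simp [chiN, ee]

lemma chi_int (k : ℤ) : ((chiN N ((k : ZMod N)) : ℂˣ) : ℂ) = ee N k := by
  rw [chi_coe]
  apply ee_eq_of_dvd_sub
  rw [ZMod.val_intCast]
  exact ⟨-(k / N), by rw [Int.emod_def]; ring⟩

lemma zmod_eq_intCast_val (α : ZMod N) : α = (((α.val : ℤ)) : ZMod N) := by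
  push_cast
  rw [ZMod.natCast_val, ZMod.cast_id]

noncomputable def gcorr (p : ZMod N × ℤ) : ℂ :=
  if p.2 = 0 ∧ p.1 ≠ 0 then (1 - ee N (-(2 * (p.1.val : ℤ))))⁻¹ else 0

noncomputable def Lc : ((ZMod N × ℤ) →₀ ℂ) →ₗ[ℂ] ℂ :=
  Finsupp.lsum ℂ fun p => LinearMap.toSpanSingleton ℂ ℂ (gcorr p)

noncomputable def Phi : TrigA (ZMod N) →ₗ[ℂ] GlHat N :=
  LinearMap.prod
    ((LinearMap.fst ℂ ℂ _) + Lc.comp (LinearMap.snd ℂ ℂ _))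
    (Ff.comp (LinearMap.snd ℂ ℂ _))

noncomputable def Psi : GlHat N →ₗ[ℂ] TrigA (ZMod N) :=
  LinearMap.prod
    ((LinearMap.fst ℂ ℂ _) - Lc.comp (Gf.comp (LinearMap.snd ℂ ℂ _)))
    (Gf.comp (LinearMap.snd ℂ ℂ _))

lemma PhiPsi (hodd : Odd N) : (Phi (N:=N)).comp Psi = LinearMap.id := by
  apply LinearMap.ext
  intro x
  have h2 : Ff (Gf x.2) = x.2 := LinearMap.congr_fun (FG_id hodd) x.2
  apply Prod.ext
  · simp [Phi, Psi, h2]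
  · simp [Phi, Psi, h2]

lemma PsiPhi (hodd : Odd N) : (Psi (N:=N)).comp Phi = LinearMap.id := by
  apply LinearMap.ext
  intro x
  have h2 : Gf (Ff x.2) = x.2 := LinearMap.congr_fun (GF_id hodd) x.2
  apply Prod.ext
  · simp [Phi, Psi, h2]
  · simp [Phi, Psi, h2]

noncomputable def EL (hodd : Odd N) : TrigA (ZMod N) ≃ₗ[ℂ] GlHat N :=
  LinearEquiv.ofLinear Phi Psi (PhiPsi hodd) (PsiPhi hodd)

lemma Phi_single (z w : ℂ) (p : ZMod N × ℤ) :
    Phi ((z, Finsupp.single p w) : TrigA (ZMod N)) = (z + w * gcorr p, w • Tf p) := by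
  apply Prod.ext
  · simp [Phi, Lc, LinearMap.toSpanSingleton_apply, smul_eq_mul]
  · simp [Phi, Ff_single]

/-- bilinear packaging of `Abrk` -/
noncomputable def ABl (χ : ZMod N → ℂˣ) :
    ((ZMod N × ℤ) →₀ ℂ) →ₗ[ℂ] ((ZMod N × ℤ) →₀ ℂ) →ₗ[ℂ] TrigA (ZMod N) :=
  Finsupp.lsum ℂ fun p => LinearMap.toSpanSingleton ℂ _
    (Finsupp.lsum ℂ fun q => LinearMap.toSpanSingleton ℂ _ (AbrkBasis χ p q))

noncomputable def glBl :
    (((Fin N × Fin N) × ℤ) →₀ ℂ) →ₗ[ℂ] (((Fin N × Fin N) × ℤ) →₀ ℂ) →ₗ[ℂ] GlHat N :=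
  Finsupp.lsum ℂ fun P => LinearMap.toSpanSingleton ℂ _
    (Finsupp.lsum ℂ fun Q => LinearMap.toSpanSingleton ℂ _ (glHatBrkBasis P Q))

lemma Abrk_eq (χ : ZMod N → ℂˣ) (x y : TrigA (ZMod N)) :
    Abrk χ x y = ABl χ x.2 y.2 := by
  simp only [Abrk, ABl, Finsupp.lsum_apply, Finsupp.sum, LinearMap.coe_sum,
    Finset.sum_apply, LinearMap.toSpanSingleton_apply, LinearMap.smul_apply,
    Finset.smul_sum, mul_smul]

lemma glHatBrk_eq (x y : GlHat N) :
    glHatBrk x y = glBl x.2 y.2 := by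
  simp only [glHatBrk, glBl, Finsupp.lsum_apply, Finsupp.sum, LinearMap.coe_sum,
    Finset.sum_apply, LinearMap.toSpanSingleton_apply, LinearMap.smul_apply,
    Finset.smul_sum, mul_smul]

end Equiv

section Core
variable [NeZero N]

lemma glBl_Tf (p q : ZMod N × ℤ) :
    glBl (Tf p) (Tf q) = ∑ j : Fin N, ∑ j' : Fin N,
      (cf p.1 p.2 j * cf q.1 q.2 j') • glHatBrkBasis (Kp p j) (Kp q j') := by
  rw [Tf, map_sum]
  rw [LinearMap.coe_sum, Finset.sum_apply]
  apply Finset.sum_congr rfl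
  intro j _
  rw [glBl, Finsupp.lsum_single, LinearMap.toSpanSingleton_apply, LinearMap.smul_apply,
    Tf, map_sum, Finset.smul_sum]
  apply Finset.sum_congr rfl
  intro j' _
  rw [Finsupp.lsum_single, LinearMap.toSpanSingleton_apply, smul_smul]

lemma cond_iff (j : Fin N) (k : ℤ) : (j = rowF N j k ∧ wrapF j k = 0) ↔ k = 0 := by
  constructor
  · rintro ⟨h1, h2⟩
    have h3 := rowF_wrapF j k
    rw [← h1, h2] at h3
    omega
  · rintro rfl
    exact ⟨(rowF_zero j).symm, wrapF_zero j⟩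

end Core

section Core2
variable [NeZero N]

lemma cast_add_val (α β : ZMod N) :
    (((α.val : ℤ) + (β.val : ℤ) : ℤ) : ZMod N) = α + β := by
  push_cast [ZMod.natCast_val, ZMod.cast_id]
  ring

lemma chi_smul_val (α β : ZMod N) (m n : ℤ) :
    ((chiN N (m • β - n • α) : ℂˣ) : ℂ) = ee N (m * (β.val:ℤ) - n * (α.val:ℤ)) := by
  have h : m • β - n • α = ((m * (β.val:ℤ) - n * (α.val:ℤ) : ℤ) : ZMod N) := by
    push_cast [ZMod.natCast_val, ZMod.cast_id, zsmul_eq_mul]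
    ring
  rw [h, chi_int]

lemma scalar_id (α β : ZMod N) (m n : ℤ) (j : Fin N) :
    ((((chiN N (m • β - n • α) : ℂˣ)) : ℂ) - ((chiN N (n • α - m • β) : ℂˣ) : ℂ))
        * cf (α + β) (m + n) j
      = cf α m (rowF N j n) * cf β n j - cf α m j * cf β n (rowF N j m) := by
  set a : ℤ := (α.val : ℤ) with ha
  set b : ℤ := (β.val : ℤ) with hb
  have hw1 := chi_smul_val α β m n
  have hw2 := chi_smul_val β α n m
  have hs : (((α + β).val : ℤ)) = (a + b) - N * ((a + b) / N) := by
    rw [← cast_add_val α β, ZMod.val_intCast, Int.emod_def]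
  have hr1 : ((rowF N j n : Fin N) : ℤ) = ((j:ℤ) + n) - N * (((j:ℤ) + n) / N) := by
    rw [rowF_coe, Int.emod_def]
  have hr2 : ((rowF N j m : Fin N) : ℤ) = ((j:ℤ) + m) - N * (((j:ℤ) + m) / N) := by
    rw [rowF_coe, Int.emod_def]
  simp only [cf]
  rw [hw1, hw2, sub_mul, ← ee_add, ← ee_add, ← ee_add, ← ee_add]
  rw [hs, hr1, hr2]
  set k0 : ℤ := (a + b) / N
  set k1 : ℤ := ((j:ℤ) + n) / N
  set k2 : ℤ := ((j:ℤ) + m) / N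
  congr 1
  · apply ee_eq_of_dvd_sub
    exact ⟨k0 * (m + n + 2*(j:ℤ)) - 2 * k1 * a, by ring⟩
  · apply ee_eq_of_dvd_sub
    exact ⟨k0 * (m + n + 2*(j:ℤ)) - 2 * k2 * b, by ring⟩

end Core2

section Core3
variable [NeZero N]

lemma dvd_cancel_two (hodd : Odd N) {d : ℤ} (h : (N:ℤ) ∣ 2*d) : (N:ℤ) ∣ d := by
  have hcop : IsCoprime ((N:ℤ)) 2 := by
    rw [Int.isCoprime_iff_gcd_eq_one]
    have h2 : Nat.Coprime N 2 := Nat.Coprime.symm (Nat.coprime_two_left.mpr hodd)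
    simpa [Int.gcd] using h2
  exact hcop.dvd_of_dvd_mul_left h

lemma core (hodd : Odd N) (p q : ZMod N × ℤ) :
    Phi (AbrkBasis (chiN N) p q) = glBl (Tf p) (Tf q) := by
  obtain ⟨α, m⟩ := p
  obtain ⟨β, n⟩ := q
  rw [glBl_Tf]
  simp only [AbrkBasis]
  rw [Phi_single]
  set w : ℂ := ((chiN N (m • β - n • α) : ℂˣ) : ℂ) - ((chiN N (n • α - m • β) : ℂˣ) : ℂ) with hwdef
  apply Prod.ext
  · -- central component
    show (if α + β = 0 ∧ m + n = 0 then (m:ℂ) else 0) + w * gcorr (α+β, m+n) = _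
    simp only [Prod.fst_sum, Prod.smul_fst, smul_eq_mul]
    have hb1 : ∀ j j' : Fin N, (glHatBrkBasis (Kp (α,m) j) (Kp (β,n) j')).1
        = if j = rowF N j' n ∧ rowF N j m = j' ∧ wrapF j m + wrapF j' n = 0
          then ((wrapF j m : ℤ):ℂ) else 0 := fun j j' => rfl
    simp only [hb1]
    by_cases hmn : m + n = 0
    · -- m + n = 0
      have hn : n = -m := by omega
      subst hn
      have hrhs : ∀ j : Fin N, (∑ j' : Fin N, cf α m j * cf β (-m) j' *
            (if j = rowF N j' (-m) ∧ rowF N j m = j' ∧ wrapF j m + wrapF j' (-m) = 0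
              then ((wrapF j m : ℤ):ℂ) else 0))
          = cf α m j * cf β (-m) (rowF N j m) * ((wrapF j m : ℤ):ℂ) := by
        intro j
        rw [Finset.sum_eq_single (rowF N j m)]
        · rw [if_pos]
          refine ⟨?_, rfl, ?_⟩
          · rw [rowF_rowF]
            have h0 : m + -m = (0:ℤ) := by ring
            rw [h0, rowF_zero]
          · rw [wrapF_add]
            have h0 : m + -m = (0:ℤ) := by ring
            rw [h0, wrapF_zero]
        · intro b _ hb
          rw [if_neg, mul_zero]
          rintro ⟨-, h2, -⟩
          exact hb h2.symm
        · intro h; exact absurd (Finset.mem_univ _) h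
      rw [Finset.sum_congr rfl (fun j _ => hrhs j)]
      set a : ℤ := (α.val : ℤ) with ha
      set b : ℤ := (β.val : ℤ) with hbd
      set t : ℤ := a + b with htd
      have hprod : ∀ j : Fin N, cf α m j * cf β (-m) (rowF N j m)
          = ee N (-(m * t)) * ee N (-(2*t) * (j:ℤ)) := by
        intro j
        simp only [cf]
        rw [← ee_add, ← ee_add]
        apply ee_eq_of_dvd_sub
        rw [rowF_coe, Int.emod_def]
        exact ⟨2 * (((j:ℤ) + m)/N) * b, by ring⟩
      rw [Finset.sum_congr rfl (fun j _ => by rw [hprod j])]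
      by_cases hab : α + β = 0
      · have hd : (N:ℤ) ∣ t := by
          have hc := cast_add_val α β
          rw [hab] at hc
          exact (ZMod.intCast_zmod_eq_zero_iff_dvd _ N).mp hc
        obtain ⟨c, hc2⟩ := hd
        have he1 : ∀ j : Fin N, ee N (-(m*t)) * ee N (-(2*t) * (j:ℤ)) = 1 := by
          intro j
          rw [ee_dvd_one ⟨-(m*c), by rw [hc2]; ring⟩,
            ee_dvd_one ⟨-(2*c*(j:ℤ)), by rw [hc2]; ring⟩, one_mul]
        rw [Finset.sum_congr rfl (fun j _ => by rw [he1 j, one_mul])]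
        rw [if_pos ⟨hab, by ring⟩, gcorr, if_neg (fun h => h.2 hab), mul_zero, add_zero]
        rw [← Int.cast_sum, sum_wrapF]
      · have hnd : ¬ (N:ℤ) ∣ t := by
          intro hd
          exact hab (by rw [← cast_add_val α β]
                        exact (ZMod.intCast_zmod_eq_zero_iff_dvd _ N).mpr hd)
        have hNt : ¬ (N:ℤ) ∣ 2*t := fun h => hnd (dvd_cancel_two hodd h)
        have hu1 : ee N (-(2*t)) ≠ 1 := by
          rw [Ne, ee_eq_one_iff]
          intro h
          exact hNt (by rw [← dvd_neg]; exact (by simpa using h))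
        have hs2 : (((α+β).val : ℤ)) = t - N*(t/N) := by
          rw [← cast_add_val α β, ZMod.val_intCast, Int.emod_def]
        have hu : ee N (-(2 * (((α+β).val : ℤ)))) = ee N (-(2*t)) := by
          apply ee_eq_of_dvd_sub
          exact ⟨2*(t/N), by rw [hs2]; ring⟩
        rw [if_neg (fun h => hab h.1), gcorr, zero_add]
        have hg : (if (m + -m = 0 ∧ ¬ α + β = 0) then
            (1 - ee N (-(2 * (((α+β).val : ℤ)))))⁻¹ else 0)
            = (1 - ee N (-(2*t)))⁻¹ := by
          rw [if_pos ⟨by ring, hab⟩, hu]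
        rw [hg]
        have hassoc : ∀ j : Fin N, ee N (-(m*t)) * ee N (-(2*t) * (j:ℤ)) * ((wrapF j m : ℤ):ℂ)
            = ee N (-(m*t)) * (ee N (-(2*t) * (j:ℤ)) * ((wrapF j m : ℤ):ℂ)) := fun j => mul_assoc _ _ _
        rw [Finset.sum_congr rfl (fun j _ => hassoc j), ← Finset.mul_sum,
          central_sum t m hNt]
        rw [hwdef, chi_smul_val, chi_smul_val]
        rw [show m * (β.val:ℤ) - -m * (α.val:ℤ) = m * t by rw [htd, ha, hbd]; ring,
          show -m * (α.val:ℤ) - m * (β.val:ℤ) = -(m * t) by rw [htd, ha, hbd]; ring]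
        have hme : ee N (-(m*t)) * ee N (2*t*m) = ee N (m*t) := by
          rw [← ee_add]; congr 1; ring
        have h1u : (1:ℂ) - ee N (-(2*t)) ≠ 0 := sub_ne_zero.mpr (Ne.symm hu1)
        have h2u : ee N (-(2*t)) - 1 ≠ 0 := sub_ne_zero.mpr hu1
        have hr : ee N (-(m*t)) * ((1 - ee N (2*t*m)) / (ee N (-(2*t)) - 1))
            = (ee N (-(m*t)) - ee N (m*t)) / (ee N (-(2*t)) - 1) := by
          rw [mul_div_assoc', mul_sub, mul_one, hme]
        rw [hr, eq_div_iff h2u]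
        field_simp
        ring
    · -- m + n ≠ 0
      rw [if_neg (fun h => hmn h.2), gcorr, if_neg (fun h => hmn h.1), mul_zero, add_zero]
      symm
      apply Finset.sum_eq_zero
      intro j _
      apply Finset.sum_eq_zero
      intro j' _
      rw [if_neg, mul_zero]
      rintro ⟨h1, h2, h3⟩
      rw [← h2, rowF_rowF] at h1
      rw [← h2, wrapF_add] at h3
      exact hmn ((cond_iff j (m+n)).mp ⟨h1, h3⟩)

  · -- finsupp component
    show w • Tf (α + β, m + n) = _
    simp only [Prod.snd_sum, Prod.smul_snd]
    have hbasis : ∀ (j j' : Fin N),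
        (glHatBrkBasis (Kp (α, m) j) (Kp (β, n) j')).2
        = (if j = rowF N j' n then Finsupp.single ((rowF N j m, j'), wrapF j m + wrapF j' n) (1:ℂ) else 0)
          - (if j' = rowF N j m then Finsupp.single ((rowF N j' n, j), wrapF j m + wrapF j' n) (1:ℂ) else 0) := by
      intro j j'
      rfl
    have hsplit : ∀ (j j' : Fin N),
        (cf α m j * cf β n j') • (glHatBrkBasis (Kp (α, m) j) (Kp (β, n) j')).2
        = (cf α m j * cf β n j') • (if j = rowF N j' n then Finsupp.single ((rowF N j m, j'), wrapF j m + wrapF j' n) (1:ℂ) else 0)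
          - (cf α m j * cf β n j') • (if j' = rowF N j m then Finsupp.single ((rowF N j' n, j), wrapF j m + wrapF j' n) (1:ℂ) else 0) := by
      intro j j'
      rw [hbasis, smul_sub]
    rw [Finset.sum_congr rfl (fun j _ => Finset.sum_congr rfl (fun j' _ => hsplit j j'))]
    simp only [Finset.sum_sub_distrib]
    have hsum1 : ∑ j : Fin N, ∑ j' : Fin N, (cf α m j * cf β n j') •
          (if j = rowF N j' n then Finsupp.single ((rowF N j m, j'), wrapF j m + wrapF j' n) (1:ℂ) else 0)
        = ∑ j' : Fin N, Finsupp.single ((rowF N j' (m+n), j'), wrapF j' (m+n))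
            (cf α m (rowF N j' n) * cf β n j') := by
      rw [Finset.sum_comm]
      apply Finset.sum_congr rfl
      intro j' _
      rw [Finset.sum_eq_single (rowF N j' n)]
      · rw [if_pos rfl, rowF_rowF, Finsupp.smul_single, smul_eq_mul, mul_one]
        rw [show n + m = m + n by ring]
        rw [show wrapF (rowF N j' n) m + wrapF j' n = wrapF j' (m+n) by
          rw [show m + n = n + m by ring, ← wrapF_add j' n m]; ring]
      · intro b _ hb
        rw [if_neg hb, smul_zero]
      · intro h; exact absurd (Finset.mem_univ _) h
    have hsum2 : ∑ j : Fin N, ∑ j' : Fin N, (cf α m j * cf β n j') •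
          (if j' = rowF N j m then Finsupp.single ((rowF N j' n, j), wrapF j m + wrapF j' n) (1:ℂ) else 0)
        = ∑ j : Fin N, Finsupp.single ((rowF N j (m+n), j), wrapF j (m+n))
            (cf α m j * cf β n (rowF N j m)) := by
      apply Finset.sum_congr rfl
      intro j _
      rw [Finset.sum_eq_single (rowF N j m)]
      · rw [if_pos rfl, rowF_rowF, Finsupp.smul_single, smul_eq_mul, mul_one,
          wrapF_add j m n]
      · intro b _ hb
        rw [if_neg hb, smul_zero]
      · intro h; exact absurd (Finset.mem_univ _) h
    rw [hsum1, hsum2]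
    rw [Tf, Finset.smul_sum, ← Finset.sum_sub_distrib]
    apply Finset.sum_congr rfl
    intro j _
    rw [Finsupp.smul_single, smul_eq_mul]
    show Finsupp.single (Kp (α+β, m+n) j) (w * cf (α+β) (m+n) j) = _
    have hKp : Kp ((α+β : ZMod N), m+n) j = ((rowF N j (m+n), j), wrapF j (m+n)) := rfl
    rw [hKp, ← Finsupp.single_sub]
    congr 1
    rw [hwdef, scalar_id]

end Core3

section Final
variable [NeZero N]

lemma main_bilmap (hodd : Odd N) :
    LinearMap.compr₂ (ABl (chiN N)) Phi = LinearMap.compl₂ ((glBl (N:=N)).comp Ff) Ff := by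
  apply Finsupp.lhom_ext
  intro p a
  apply Finsupp.lhom_ext
  intro q b
  simp only [LinearMap.compr₂_apply, LinearMap.compl₂_apply, LinearMap.comp_apply,
    ABl, Finsupp.lsum_single, LinearMap.toSpanSingleton_apply, LinearMap.smul_apply,
    map_smul, Ff_single]
  rw [core hodd p q]
  simp only [glBl, map_smul]
  rw [smul_comm a b]

lemma final (hodd : Odd N) (x y : TrigA (ZMod N)) :
    EL hodd (Abrk (chiN N) x y) = glHatBrk (EL hodd x) (EL hodd y) := by
  have h1 : ∀ z : TrigA (ZMod N), EL hodd z = Phi z := fun z => rfl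
  rw [h1, h1, h1, Abrk_eq, glHatBrk_eq]
  have h2 : ∀ z : TrigA (ZMod N), (Phi z).2 = Ff z.2 := fun z => rfl
  rw [h2, h2]
  have h3 := LinearMap.congr_fun (LinearMap.congr_fun (main_bilmap hodd) x.2) y.2
  simpa using h3

end Final


theorem stmt14 (l : ℕ) (hl : 1 ≤ l) :
    ∃ e : TrigA (ZMod (2 * l + 1)) ≃ₗ[ℂ] GlHat (2 * l + 1),
      ∀ x y : TrigA (ZMod (2 * l + 1)),
        e (Abrk (chiN (2 * l + 1)) x y) = glHatBrk (e x) (e y) := by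
  haveI : NeZero (2 * l + 1) := ⟨by omega⟩
  have hodd : Odd (2 * l + 1) := ⟨l, by ring⟩
  exact ⟨EL hodd, final hodd⟩
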